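/- Let (W,S) be a Coxeter system, W₁ a standard parabolic subgroup, and σ, w ∈ W. Set K_{σW₁}(w) = { v ∈ σW₁ : v ≤ w }. If K_{σW₁}(w) is nonempty (equivalently, if brmin(σW₁) ≤ w), then K_{σW₁}(w) has a unique maximal element in the Bruhat order. -/

import Mathlib

variable {B W : Type*} [Group W] {M : CoxeterMatrix B}

/-- The (strong) Bruhat order on the Coxeter group `W`: `u ≤ v` if and only if some
reduced word for `v` admits a sublist whose product is `u`. -/
def BruhatLE (cs : CoxeterSystem M W) (u v : W) : Prop :=
  ∃ ω : List B, cs.IsReduced ω ∧ cs.wordProd ω = v ∧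
    ∃ ω' : List B, ω'.Sublist ω ∧ cs.wordProd ω' = u

/-- The strict Bruhat order. -/
def BruhatLT (cs : CoxeterSystem M W) (u v : W) : Prop :=
  BruhatLE cs u v ∧ u ≠ v

/-- `m` is the unique minimal element of `K` in the Bruhat order, i.e. `m ∈ K` and
`m` is Bruhat-below every element of `K`. -/
def IsBrMin (cs : CoxeterSystem M W) (K : Set W) (m : W) : Prop :=
  m ∈ K ∧ ∀ x ∈ K, BruhatLE cs m x

/-- `m` is the unique maximal element of `K` in the Bruhat order, i.e. `m ∈ K` and
`m` is Bruhat-above every element of `K`. -/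
def IsBrMax (cs : CoxeterSystem M W) (K : Set W) (m : W) : Prop :=
  m ∈ K ∧ ∀ x ∈ K, BruhatLE cs x m

/-- A standard parabolic subgroup: a subgroup generated by a subset of the simple
reflections. -/
def IsStdParabolic (cs : CoxeterSystem M W) (P : Subgroup W) : Prop :=
  ∃ X : Set B, P = Subgroup.closure (cs.simple '' X)

/-- The left coset `u•W₁ = {u * b : b ∈ W₁}`. -/
def lCoset (W₁ : Subgroup W) (u : W) : Set W := {x | ∃ b ∈ W₁, x = u * b}

/-- The double coset `W₁ u W₂ = {a * u * b : a ∈ W₁, b ∈ W₂}`. -/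
def dblCoset (W₁ W₂ : Subgroup W) (u : W) : Set W :=
  {x | ∃ a ∈ W₁, ∃ b ∈ W₂, x = a * u * b}

/-!
The heart of the proof is the strong exchange condition, which Mathlib lacks. Tits' action of `W`
on `W × ZMod 2` shows that the parity of the number of occurrences of a reflection `t` in the
inversion sequence of a word depends only on the product `w` of the word, and is odd when
`ℓ(wt) < ℓ(w)`. Consequently the subword order coincides with the order generated by
length-increasing reflection steps, which gives transitivity, the subword property for every
reduced word, and the lifting property at a left descent `s` of `w`.

The maximum is then built by induction on `ℓ(w)`, with `s` a left descent of `w`. By Deodhar's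
lemma, `s` either stabilises the coset `C = σW₁`, or raises all of its elements, or lowers all of
them. Accordingly the maximum of `K_C(w)` is the larger of `m` and `sm`, where `m` is the maximum
of `K_C(sw)`; or the maximum of `K_C(sw)` itself; or `s` times the maximum of `K_{sC}(sw)`.
-/

section StrongExchange

open Classical

variable {G : Type*} [Group G]

theorem conj_eq_iff_of_mul_self {a : G} (ha : a * a = 1) (t c : G) :
    a * t * a = c ↔ t = a * c * a := by
  have hconj (x : G) : a * (a * x * a) * a = x := by
    rw [show a * (a * x * a) * a = (a * a) * x * (a * a) by group, ha, one_mul, mul_one]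
  constructor <;> rintro rfl <;> rw [hconj]

noncomputable def titsPerm (a : G) (ha : a * a = 1) : Equiv.Perm (G × ZMod 2) :=
  Function.Involutive.toPerm (fun p => (a * p.1 * a, p.2 + if p.1 = a then 1 else 0)) <| by
    rintro ⟨t, e⟩
    have hconj : a * (a * t * a) * a = t := ((conj_eq_iff_of_mul_self ha _ _).1 rfl).symm
    have hfix : a * t * a = a ↔ t = a := by rw [conj_eq_iff_of_mul_self ha, ha, one_mul]
    simp only [hconj, hfix, add_assoc, CharTwo.add_self_eq_zero, add_zero]

theorem titsPerm_apply (a : G) (ha : a * a = 1) (t : G) (e : ZMod 2) :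
    titsPerm a ha (t, e) = (a * t * a, e + if t = a then 1 else 0) := rfl

theorem titsPerm_mul_pow_apply {a b : G} (ha : a * a = 1) (hb : b * b = 1) (k : ℕ) (t : G)
    (e : ZMod 2) :
    ((titsPerm a ha * titsPerm b hb) ^ k) (t, e) =
      ((a * b) ^ k * t * ((a * b) ^ k)⁻¹,
        e + ∑ n ∈ Finset.range (2 * k), if t = b * (a * b) ^ n then 1 else 0) := by
  have ha' : a⁻¹ = a := inv_eq_of_mul_eq_one_right ha
  have hb' : b⁻¹ = b := inv_eq_of_mul_eq_one_right hb
  induction k generalizing t e with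
  | zero => simp
  | succ k ih =>
    have hconj : a * (b * t * b) * a = (a * b) * t * (a * b)⁻¹ := by
      rw [mul_inv_rev, ha', hb']; group
    have hfix : b * t * b = a ↔ t = b * (a * b) ^ 1 := by
      rw [conj_eq_iff_of_mul_self hb, pow_one, mul_assoc]
    have hshift (n : ℕ) : (a * b) * t * (a * b)⁻¹ = b * (a * b) ^ n ↔
        t = b * (a * b) ^ (n + 1 + 1) := by
      rw [mul_inv_eq_iff_eq_mul, ← eq_inv_mul_iff_mul_eq, mul_inv_rev, ha', hb', pow_succ,
        pow_succ']
      simp only [mul_assoc]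
    rw [pow_succ, Equiv.Perm.mul_apply, Equiv.Perm.mul_apply, titsPerm_apply, titsPerm_apply, ih,
      hconj, Finset.sum_congr rfl fun n _ => if_congr (hshift n) rfl rfl,
      show 2 * (k + 1) = 2 * k + 1 + 1 by ring, Finset.sum_range_succ', Finset.sum_range_succ',
      if_congr hfix rfl rfl]
    refine Prod.ext ?_ ?_
    · simp only [pow_succ]; group
    · simp only [pow_zero, mul_one]; abel

namespace CoxeterSystem

variable (cs : CoxeterSystem M W)

local prefix:100 "s" => cs.simple
local prefix:100 "π" => cs.wordProd
local prefix:100 "ℓ" => cs.length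
local prefix:100 "ris" => cs.rightInvSeq
local prefix:100 "lis" => cs.leftInvSeq

-- Since `(s i * s j) ^ M i j = 1`, the summands in `titsPerm_mul_pow_apply` are `M i j`-periodic,
-- so their sum over `2 * M i j` terms vanishes in `ZMod 2`.
theorem isLiftable_titsPerm :
    M.IsLiftable fun i => titsPerm (s i) (cs.simple_mul_simple_self i) := by
  intro i j
  ext ⟨t, e⟩ : 1
  have hper : (s i * s j) ^ M i j = 1 := cs.simple_mul_simple_pow i j
  rw [titsPerm_mul_pow_apply, two_mul, Finset.sum_range_add]
  simp only [pow_add, hper, one_mul, inv_one, mul_one, CharTwo.add_self_eq_zero, add_zero,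
    Equiv.Perm.coe_one, id_eq]

noncomputable def titsRep : W →* Equiv.Perm (W × ZMod 2) :=
  cs.lift ⟨_, cs.isLiftable_titsPerm⟩

theorem titsRep_simple (i : B) :
    cs.titsRep (s i) = titsPerm (s i) (cs.simple_mul_simple_self i) :=
  cs.lift_apply_simple cs.isLiftable_titsPerm i

noncomputable def inversionParity (w t : W) : ZMod 2 := (cs.titsRep w (t, 0)).2

theorem titsRep_apply (w t : W) (e : ZMod 2) :
    cs.titsRep w (t, e) = (w * t * w⁻¹, e + cs.inversionParity w t) := by
  revert t e
  induction w using cs.simple_induction_left with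
  | one => simp [inversionParity]
  | mul_simple_left w i ih =>
    intro t e
    rw [inversionParity, map_mul, Equiv.Perm.mul_apply, Equiv.Perm.mul_apply, ih, ih,
      titsRep_simple, titsPerm_apply, titsPerm_apply, mul_inv_rev, inv_simple, zero_add, add_assoc]
    simp only [mul_assoc]

theorem inversionParity_mul (u v t : W) :
    cs.inversionParity (u * v) t =
      cs.inversionParity v t + cs.inversionParity u (v * t * v⁻¹) := by
  rw [inversionParity, map_mul, Equiv.Perm.mul_apply, titsRep_apply, titsRep_apply, zero_add]

theorem inversionParity_one (t : W) : cs.inversionParity 1 t = 0 := by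
  simp [inversionParity]

theorem inversionParity_simple (i : B) (t : W) :
    cs.inversionParity (s i) t = if t = s i then 1 else 0 := by
  simp [inversionParity, titsRep_simple, titsPerm_apply]

theorem inversionParity_wordProd (ω : List B) (t : W) :
    cs.inversionParity (π ω) t = (ris ω).count t := by
  induction ω with
  | nil => simp [inversionParity_one]
  | cons i ω ih =>
    have hiff : π ω * t * (π ω)⁻¹ = s i ↔ (π ω)⁻¹ * s i * π ω = t := by
      constructor <;> intro h <;> rw [← h] <;> group
    rw [wordProd_cons, inversionParity_mul, ih, inversionParity_simple, rightInvSeq,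
      List.count_cons, if_congr hiff rfl rfl]
    simp

theorem IsReflection.inversionParity_self {t : W} (ht : cs.IsReflection t) :
    cs.inversionParity t t = 1 := by
  obtain ⟨x, k, hxk⟩ := ht
  have hx := cs.inversionParity_mul x x⁻¹ t
  have h₁ : (s k * x⁻¹) * t * (s k * x⁻¹)⁻¹ = s k := by rw [hxk]; group
  have h₂ : x⁻¹ * t * x⁻¹⁻¹ = s k := by rw [hxk]; group
  rw [mul_inv_cancel, inversionParity_one, h₂] at hx
  calc cs.inversionParity t t = cs.inversionParity (x * (s k * x⁻¹)) t := by rw [hxk, mul_assoc]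
    _ = 1 := by
      rw [inversionParity_mul, inversionParity_mul, h₁, h₂, inversionParity_simple, if_pos rfl,
        add_right_comm, ← hx, zero_add]

variable {cs}

theorem mem_rightInvSeq_of_isRightInversion {ω : List B} {t : W}
    (h : cs.IsRightInversion (π ω) t) : t ∈ ris ω := by
  obtain ⟨ht, hlt⟩ := h
  obtain ⟨α, hα, hαω⟩ := cs.exists_isReduced (π ω * t)
  have hω : π ω = π α * t := by rw [← hαω, mul_assoc, ht.mul_self, mul_one]
  have hα₀ : (ris α).count t = 0 := by
    refine List.count_eq_zero.mpr fun hmem => ?_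
    have := (cs.isRightInversion_of_mem_rightInvSeq hα hmem).2
    rw [← hω, ← hαω] at this
    omega
  have hparity : cs.inversionParity (π ω) t = 1 := by
    rw [hω, inversionParity_mul, ht.inversionParity_self, mul_inv_cancel_right,
      inversionParity_wordProd, hα₀, Nat.cast_zero, add_zero]
  rw [inversionParity_wordProd] at hparity
  refine List.count_pos_iff.mp (Nat.pos_of_ne_zero fun h0 => ?_)
  rw [h0, Nat.cast_zero] at hparity
  exact zero_ne_one hparity

theorem mem_leftInvSeq_of_isLeftInversion {ω : List B} {t : W}
    (h : cs.IsLeftInversion (π ω) t) : t ∈ lis ω := by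
  have : t ∈ ris ω.reverse := mem_rightInvSeq_of_isRightInversion <| by
    rwa [wordProd_reverse, isRightInversion_inv_iff]
  rwa [rightInvSeq_reverse, List.mem_reverse] at this

theorem exists_eraseIdx_eq_mul_of_isLeftInversion {ω : List B} {t : W}
    (h : cs.IsLeftInversion (π ω) t) : ∃ j < ω.length, π (ω.eraseIdx j) = t * π ω := by
  obtain ⟨j, hj, rfl⟩ := List.getElem_of_mem (mem_leftInvSeq_of_isLeftInversion h)
  refine ⟨j, by simpa using hj, ?_⟩
  rw [← getD_leftInvSeq_mul_wordProd, List.getD_eq_getElem]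

theorem IsLeftDescent.eq_or_length_lt_of_isLeftInversion {w t : W} {i : B}
    (hw : cs.IsLeftDescent w i) (ht : cs.IsLeftInversion w t) :
    t * w = s i * w ∨ ℓ (s i * (t * w)) + 1 < ℓ w := by
  obtain ⟨δ, hδ, hδw⟩ := cs.exists_isReduced (s i * w)
  have hw' : π (i :: δ) = w := by rw [wordProd_cons, ← hδw, simple_mul_simple_cancel_left]
  have hlen : ℓ w = δ.length + 1 := by
    rw [← hδ.eq, ← hδw, cs.isLeftDescent_iff.mp hw]
  rw [← hw'] at ht
  obtain ⟨j, hj, hjeq⟩ := exists_eraseIdx_eq_mul_of_isLeftInversion ht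
  rw [hw'] at hjeq
  rcases j with _ | m
  · left
    rw [← hjeq, List.eraseIdx_cons_zero, hδw]
  · right
    rw [List.eraseIdx_cons_succ, wordProd_cons] at hjeq
    rw [← hjeq, simple_mul_simple_cancel_left]
    have := cs.length_wordProd_le (δ.eraseIdx m)
    have := List.length_eraseIdx_add_one (Nat.lt_of_succ_lt_succ hj)
    omega

end CoxeterSystem

end StrongExchange

open CoxeterSystem Relation

section BruhatOrder

variable {cs : CoxeterSystem M W}

local prefix:100 "s" => cs.simple
local prefix:100 "π" => cs.wordProd
local prefix:100 "ℓ" => cs.length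

variable (cs) in
def BruhatStep (u w : W) : Prop := ∃ t, cs.IsLeftInversion w t ∧ t * w = u

theorem BruhatStep.simple_mul {u w : W} (h : BruhatStep cs u w) (i : B) :
    s i * u = w ∨ BruhatStep cs (s i * u) (s i * w) := by
  obtain ⟨t, ⟨ht, hlt⟩, rfl⟩ := h
  refine or_iff_not_imp_left.mpr fun hne => ⟨s i * t * s i, ⟨?_, ?_⟩, ?_⟩
  · simpa [inv_simple] using ht.conj (s i)
  · rw [show s i * t * s i * (s i * w) = s i * (t * w) by
      simp [mul_assoc, simple_mul_simple_cancel_left]]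
    rcases cs.length_simple_mul w i with hasc | hdesc
    · have := cs.length_mul_le (s i) (t * w)
      rw [length_simple] at this
      omega
    · rcases IsLeftDescent.eq_or_length_lt_of_isLeftInversion (i := i) (by
        rw [IsLeftDescent]; omega) ⟨ht, hlt⟩ with heq | hlt'
      · exact absurd (by rw [heq, simple_mul_simple_cancel_left]) hne
      · omega
  · simp [mul_assoc, simple_mul_simple_cancel_left]

theorem reflTransGen_bruhatStep_simple_mul {u w : W} (h : ReflTransGen (BruhatStep cs) u w)
    (i : B) :
    ReflTransGen (BruhatStep cs) (s i * u) w ∨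
      ReflTransGen (BruhatStep cs) (s i * u) (s i * w) := by
  induction h using ReflTransGen.head_induction_on with
  | refl => exact Or.inr .refl
  | head hstep hchain ih =>
    rcases hstep.simple_mul i with heq | hstep'
    · exact Or.inl (heq ▸ hchain)
    · exact ih.imp (.head hstep') (.head hstep')

theorem exists_sublist_of_reflTransGen_bruhatStep {u w : W}
    (h : ReflTransGen (BruhatStep cs) u w) {ω : List B} (hω : π ω = w) :
    ∃ ω' : List B, ω'.Sublist ω ∧ π ω' = u := by
  induction h generalizing ω with
  | refl => exact ⟨ω, .refl ω, hω⟩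
  | tail _ hstep ih =>
    obtain ⟨t, ht, rfl⟩ := hstep
    subst hω
    obtain ⟨j, -, hj⟩ := exists_eraseIdx_eq_mul_of_isLeftInversion ht
    obtain ⟨ω', hsub, hω'⟩ := ih hj
    exact ⟨ω', hsub.trans (List.eraseIdx_sublist ω j), hω'⟩

theorem bruhatStep_wordProd_cons {i : B} {ω : List B} (hω : cs.IsReduced (i :: ω)) :
    BruhatStep cs (π ω) (π (i :: ω)) := by
  refine ⟨s i, (cs.isLeftInversion_simple_iff_isLeftDescent _ i).mpr ?_, ?_⟩
  · have h₁ : ℓ (s i * π ω) = ω.length + 1 := by rw [← wordProd_cons]; exact hω.eq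
    have h₂ : ℓ (π ω) = ω.length := hω.drop 1
    rw [IsLeftDescent, wordProd_cons, simple_mul_simple_cancel_left, h₁, h₂]
    omega
  · rw [wordProd_cons, simple_mul_simple_cancel_left]

theorem reflTransGen_bruhatStep_of_sublist {ω ω' : List B} (h : ω'.Sublist ω)
    (hω : cs.IsReduced ω) : ReflTransGen (BruhatStep cs) (π ω') (π ω) := by
  induction h with
  | slnil => exact .refl
  | cons i _ ih => exact (ih (hω.drop 1)).tail (bruhatStep_wordProd_cons hω)
  | cons_cons i _ ih =>
    rw [wordProd_cons]
    rcases reflTransGen_bruhatStep_simple_mul (ih (hω.drop 1)) i with h | h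
    · exact h.tail (bruhatStep_wordProd_cons hω)
    · rwa [← wordProd_cons] at h

theorem bruhatLE_iff_reflTransGen {u w : W} :
    BruhatLE cs u w ↔ ReflTransGen (BruhatStep cs) u w := by
  constructor
  · rintro ⟨ω, hω, rfl, ω', hsub, rfl⟩
    exact reflTransGen_bruhatStep_of_sublist hsub hω
  · intro h
    obtain ⟨ω, hω, rfl⟩ := cs.exists_isReduced w
    exact ⟨ω, hω, rfl, exists_sublist_of_reflTransGen_bruhatStep h rfl⟩

theorem BruhatLE.exists_sublist {u w : W} (h : BruhatLE cs u w) {ω : List B} (hω : π ω = w) :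
    ∃ ω' : List B, ω'.Sublist ω ∧ π ω' = u :=
  exists_sublist_of_reflTransGen_bruhatStep (bruhatLE_iff_reflTransGen.mp h) hω

theorem BruhatLE.refl (w : W) : BruhatLE cs w w :=
  bruhatLE_iff_reflTransGen.mpr .refl

theorem BruhatLE.trans {u v w : W} (huv : BruhatLE cs u v) (hvw : BruhatLE cs v w) :
    BruhatLE cs u w :=
  bruhatLE_iff_reflTransGen.mpr <|
    (bruhatLE_iff_reflTransGen.mp huv).trans (bruhatLE_iff_reflTransGen.mp hvw)

theorem BruhatLE.length_le {u w : W} (h : BruhatLE cs u w) : ℓ u ≤ ℓ w := by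
  obtain ⟨ω, hω, rfl, ω', hsub, rfl⟩ := h
  exact (cs.length_wordProd_le ω').trans (hω.eq ▸ hsub.length_le)

theorem bruhatLE_simple_mul_of_isLeftDescent {w : W} {i : B} (hw : cs.IsLeftDescent w i) :
    BruhatLE cs (s i * w) w :=
  bruhatLE_iff_reflTransGen.mpr <|
    .single ⟨s i, (cs.isLeftInversion_simple_iff_isLeftDescent w i).mpr hw, rfl⟩

theorem bruhatLE_simple_mul_of_not_isLeftDescent {u : W} {i : B} (hu : ¬cs.IsLeftDescent u i) :
    BruhatLE cs u (s i * u) := by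
  have hsu : cs.IsLeftDescent (s i * u) i := by
    rwa [cs.isLeftDescent_iff_not_isLeftDescent_mul, simple_mul_simple_cancel_left]
  simpa [simple_mul_simple_cancel_left] using bruhatLE_simple_mul_of_isLeftDescent hsu

theorem BruhatLE.simple_mul_of_isLeftDescent {u w : W} {i : B} (hw : cs.IsLeftDescent w i)
    (h : BruhatLE cs u w) : BruhatLE cs (s i * u) w := by
  rcases reflTransGen_bruhatStep_simple_mul (bruhatLE_iff_reflTransGen.mp h) i with h' | h'
  · exact bruhatLE_iff_reflTransGen.mpr h'
  · exact (bruhatLE_iff_reflTransGen.mpr h').trans (bruhatLE_simple_mul_of_isLeftDescent hw)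

theorem BruhatLE.le_or_simple_mul_le {u w : W} (h : BruhatLE cs u w) (i : B) :
    BruhatLE cs u (s i * w) ∨ BruhatLE cs (s i * u) (s i * w) := by
  obtain ⟨δ, hδ, hδw⟩ := cs.exists_isReduced (s i * w)
  have hw' : π (i :: δ) = w := by rw [wordProd_cons, ← hδw, simple_mul_simple_cancel_left]
  obtain ⟨ω', hsub, rfl⟩ := h.exists_sublist hw'
  rcases List.sublist_cons_iff.mp hsub with hsub | ⟨r, rfl, hr⟩
  · exact Or.inl ⟨δ, hδ, hδw.symm, ω', hsub, rfl⟩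
  · refine Or.inr ⟨δ, hδ, hδw.symm, r, hr, ?_⟩
    rw [wordProd_cons, simple_mul_simple_cancel_left]

theorem bruhatLE_simple_mul_iff {u w : W} {i : B} (hu : cs.IsLeftDescent u i)
    (hw : cs.IsLeftDescent w i) : BruhatLE cs (s i * u) (s i * w) ↔ BruhatLE cs u w := by
  constructor
  · intro h
    simpa [simple_mul_simple_cancel_left] using
      (h.trans (bruhatLE_simple_mul_of_isLeftDescent hw)).simple_mul_of_isLeftDescent hw
  · intro h
    rcases h.le_or_simple_mul_le i with h' | h'
    · exact (bruhatLE_simple_mul_of_isLeftDescent hu).trans h'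
    · exact h'

theorem simple_mul_eq_mul_simple_of_isLeftDescent {v : W} {i k : B} (hv : cs.IsLeftDescent v i)
    (hvk : ¬cs.IsLeftDescent (v * s k) i) : s i * v = v * s k := by
  have h₁ := cs.isLeftDescent_iff.mp hv
  have h₂ := cs.not_isLeftDescent_iff.mp hvk
  have h₃ : ℓ (s i * (v * s k)) ≤ ℓ (s i * v) + 1 := by
    simpa [← mul_assoc, length_simple] using cs.length_mul_le (s i * v) (s k)
  have h₄ := cs.length_mul_simple v k
  have htv : v * s k * v⁻¹ * v = v * s k := inv_mul_cancel_right _ _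
  have ht : cs.IsLeftInversion v (v * s k * v⁻¹) :=
    ⟨(cs.isReflection_simple k).conj v, by rw [htv]; omega⟩
  rcases hv.eq_or_length_lt_of_isLeftInversion ht with h | h
  · rw [← h, htv]
  · rw [htv] at h
    omega

theorem isLeftDescent_mul_simple_iff {v : W} {i k : B} (hne : s i * v ≠ v * s k) :
    cs.IsLeftDescent (v * s k) i ↔ cs.IsLeftDescent v i := by
  refine ⟨fun hvk => by_contra fun hv => hne ?_, fun hv => by_contra fun hvk => hne ?_⟩
  · rw [← cs.simple_mul_simple_cancel_right (w := v) k] at hv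
    have := simple_mul_eq_mul_simple_of_isLeftDescent hvk hv
    rw [simple_mul_simple_cancel_right] at this
    nth_rewrite 1 [← this]
    rw [simple_mul_simple_cancel_left]
  · exact simple_mul_eq_mul_simple_of_isLeftDescent hv hvk

theorem mul_mem_lCoset_mul {H : Subgroup W} {σ v : W} (g : W) (hv : v ∈ lCoset H σ) :
    g * v ∈ lCoset H (g * σ) := by
  obtain ⟨b, hb, rfl⟩ := hv
  exact ⟨b, hb, (mul_assoc _ _ _).symm⟩

theorem lCoset_trichotomy {W₁ : Subgroup W} (hW₁ : IsStdParabolic cs W₁) (σ : W) (i : B) :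
    (∀ v ∈ lCoset W₁ σ, s i * v ∈ lCoset W₁ σ) ∨ (∀ v ∈ lCoset W₁ σ, ¬cs.IsLeftDescent v i) ∨
      ∀ v ∈ lCoset W₁ σ, cs.IsLeftDescent v i := by
  obtain ⟨X, rfl⟩ := hW₁
  refine or_iff_not_imp_left.mpr fun hstab => ?_
  push Not at hstab
  obtain ⟨u, ⟨c, hc, rfl⟩, hsu⟩ := hstab
  have hne : ∀ b ∈ Subgroup.closure (cs.simple '' X), ∀ k ∈ X,
      s i * (σ * b) ≠ σ * b * s k := by
    intro b hb k hk heq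
    refine hsu ⟨b * s k * b⁻¹ * c, ?_, ?_⟩
    · have hk : s k ∈ Subgroup.closure (cs.simple '' X) := Subgroup.subset_closure ⟨k, hk, rfl⟩
      exact mul_mem (mul_mem (mul_mem hb hk) (inv_mem hb)) hc
    · calc s i * (σ * c) = s i * (σ * b) * (b⁻¹ * c) := by group
        _ = σ * (b * s k * b⁻¹ * c) := by rw [heq]; group
  have hconst : ∀ b ∈ Subgroup.closure (cs.simple '' X),
      cs.IsLeftDescent (σ * b) i ↔ cs.IsLeftDescent σ i := by
    intro b hb
    induction hb using Subgroup.closure_induction_right with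
    | one => rw [mul_one]
    | mul_right b hb _ hk ih =>
      obtain ⟨k, hk, rfl⟩ := hk
      rwa [← mul_assoc, isLeftDescent_mul_simple_iff (hne b hb k hk)]
    | mul_inv_cancel b hb _ hk ih =>
      obtain ⟨k, hk, rfl⟩ := hk
      rwa [inv_simple, ← mul_assoc, isLeftDescent_mul_simple_iff (hne b hb k hk)]
  by_cases hσ : cs.IsLeftDescent σ i
  · exact Or.inr fun v ⟨b, hb, hv⟩ => hv ▸ (hconst b hb).mpr hσ
  · exact Or.inl fun v ⟨b, hb, hv⟩ => hv ▸ mt (hconst b hb).mp hσ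

variable (cs) in
/-- The set `K_C(w)` of the paper. -/
def bruhatBelow (C : Set W) (w : W) : Set W :=
  {v | v ∈ C ∧ BruhatLE cs v w}

theorem isBrMax_bruhatBelow_self {C : Set W} {w : W} (hw : w ∈ C) :
    IsBrMax cs (bruhatBelow cs C w) w :=
  ⟨⟨hw, .refl w⟩, fun _ hv => hv.2⟩

theorem exists_isBrMax_bruhatBelow_of_forall_simple_mul_mem {C : Set W} {w : W} {i : B}
    (hw : cs.IsLeftDescent w i) (hC : ∀ v ∈ C, s i * v ∈ C)
    (hne : (bruhatBelow cs C w).Nonempty)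
    (ih : (bruhatBelow cs C (s i * w)).Nonempty →
      ∃ m, IsBrMax cs (bruhatBelow cs C (s i * w)) m) :
    ∃ m, IsBrMax cs (bruhatBelow cs C w) m := by
  have hsw := bruhatLE_simple_mul_of_isLeftDescent hw
  obtain ⟨v, hvC, hvw⟩ := hne
  obtain ⟨m, ⟨hmC, hmw⟩, hmax⟩ := ih <| by
    rcases hvw.le_or_simple_mul_le i with h | h
    exacts [⟨v, hvC, h⟩, ⟨s i * v, hC v hvC, h⟩]
  -- `M'` is the larger of `m` and `s m`
  obtain ⟨M', hM'C, hM'i, hmM', hM'w⟩ : ∃ M', M' ∈ C ∧ cs.IsLeftDescent M' i ∧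
      BruhatLE cs m M' ∧ BruhatLE cs M' w := by
    by_cases hm : cs.IsLeftDescent m i
    · exact ⟨m, hmC, hm, .refl m, hmw.trans hsw⟩
    · refine ⟨s i * m, hC m hmC, ?_, bruhatLE_simple_mul_of_not_isLeftDescent hm,
        (hmw.trans hsw).simple_mul_of_isLeftDescent hw⟩
      rwa [cs.isLeftDescent_iff_not_isLeftDescent_mul, simple_mul_simple_cancel_left]
  refine ⟨M', ⟨hM'C, hM'w⟩, fun x ⟨hxC, hxw⟩ => ?_⟩
  rcases hxw.le_or_simple_mul_le i with h | h
  · exact (hmax x ⟨hxC, h⟩).trans hmM'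
  · simpa [simple_mul_simple_cancel_left] using
      ((hmax _ ⟨hC x hxC, h⟩).trans hmM').simple_mul_of_isLeftDescent hM'i

theorem bruhatBelow_eq_of_forall_not_isLeftDescent {C : Set W} {w : W} {i : B}
    (hw : cs.IsLeftDescent w i) (hC : ∀ v ∈ C, ¬cs.IsLeftDescent v i) :
    bruhatBelow cs C w = bruhatBelow cs C (s i * w) := by
  ext v
  refine ⟨fun ⟨hvC, hvw⟩ => ⟨hvC, ?_⟩, fun ⟨hvC, hvw⟩ =>
    ⟨hvC, hvw.trans (bruhatLE_simple_mul_of_isLeftDescent hw)⟩⟩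
  rcases hvw.le_or_simple_mul_le i with h | h
  exacts [h, (bruhatLE_simple_mul_of_not_isLeftDescent (hC v hvC)).trans h]

theorem exists_isBrMax_bruhatBelow_of_forall_isLeftDescent {C C' : Set W} {w : W} {i : B}
    (hw : cs.IsLeftDescent w i) (hC : ∀ v ∈ C, cs.IsLeftDescent v i)
    (hCC' : ∀ v ∈ C, s i * v ∈ C') (hC'C : ∀ v ∈ C', s i * v ∈ C)
    (hne : (bruhatBelow cs C w).Nonempty)
    (ih : (bruhatBelow cs C' (s i * w)).Nonempty →
      ∃ m, IsBrMax cs (bruhatBelow cs C' (s i * w)) m) :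
    ∃ m, IsBrMax cs (bruhatBelow cs C w) m := by
  have hmem : ∀ v ∈ bruhatBelow cs C w, s i * v ∈ bruhatBelow cs C' (s i * w) :=
    fun v ⟨hvC, hvw⟩ => ⟨hCC' v hvC, (bruhatLE_simple_mul_iff (hC v hvC) hw).mpr hvw⟩
  obtain ⟨v, hv⟩ := hne
  obtain ⟨m, ⟨hmC', hmw⟩, hmax⟩ := ih ⟨s i * v, hmem v hv⟩
  have hsm : s i * m ∈ C := hC'C m hmC'
  refine ⟨s i * m, ⟨hsm, ?_⟩, fun x hx => ?_⟩
  · rwa [← bruhatLE_simple_mul_iff (hC _ hsm) hw, simple_mul_simple_cancel_left]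
  · rw [← bruhatLE_simple_mul_iff (hC x hx.1) (hC _ hsm), simple_mul_simple_cancel_left]
    exact hmax _ (hmem x hx)

theorem exists_isBrMax_bruhatBelow_lCoset {H : Subgroup W}
    (htri : ∀ σ i, (∀ v ∈ lCoset H σ, s i * v ∈ lCoset H σ) ∨
      (∀ v ∈ lCoset H σ, ¬cs.IsLeftDescent v i) ∨ ∀ v ∈ lCoset H σ, cs.IsLeftDescent v i)
    (w σ : W) (hne : (bruhatBelow cs (lCoset H σ) w).Nonempty) :
    ∃ m, IsBrMax cs (bruhatBelow cs (lCoset H σ) w) m := by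
  obtain rfl | hw1 := eq_or_ne w 1
  · obtain ⟨v, hvC, hv1⟩ := hne
    obtain rfl : v = 1 := cs.length_eq_zero_iff.mp (by simpa using hv1.length_le)
    exact ⟨1, isBrMax_bruhatBelow_self hvC⟩
  obtain ⟨i, hi⟩ := cs.exists_leftDescent_of_ne_one hw1
  have ih (σ' : W) := exists_isBrMax_bruhatBelow_lCoset htri (s i * w) σ'
  rcases htri σ i with hC | hC | hC
  · exact exists_isBrMax_bruhatBelow_of_forall_simple_mul_mem hi hC hne (ih σ)
  · rw [bruhatBelow_eq_of_forall_not_isLeftDescent hi hC] at hne ⊢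
    exact ih σ hne
  · refine exists_isBrMax_bruhatBelow_of_forall_isLeftDescent hi hC (fun v hv => ?_)
      (fun v hv => ?_) hne (ih (s i * σ))
    · exact mul_mem_lCoset_mul (s i) hv
    · simpa [simple_mul_simple_cancel_left] using mul_mem_lCoset_mul (s i) hv
termination_by cs.length w
decreasing_by exact hi

end BruhatOrder

/-- Let `W₁` be a standard parabolic subgroup and `σ, w ∈ W`, and set
`K_{σW₁}(w) = { v ∈ σW₁ : v ≤ w }`.  Then `K_{σW₁}(w)` is nonempty if and only if
`brmin(σW₁) ≤ w`, and if it is nonempty then it has a unique maximal element in the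
Bruhat order. -/
theorem stmt_13 (cs : CoxeterSystem M W) (W₁ : Subgroup W)
    (h₁ : IsStdParabolic cs W₁) (σ w : W) (mσ : W)
    (hmσ : IsBrMin cs (lCoset W₁ σ) mσ) :
    ({v | v ∈ lCoset W₁ σ ∧ BruhatLE cs v w}.Nonempty ↔ BruhatLE cs mσ w) ∧
    ({v | v ∈ lCoset W₁ σ ∧ BruhatLE cs v w}.Nonempty →
      ∃ m : W, IsBrMax cs {v | v ∈ lCoset W₁ σ ∧ BruhatLE cs v w} m) :=
  ⟨⟨fun ⟨v, hvC, hvw⟩ => (hmσ.2 v hvC).trans hvw, fun h => ⟨mσ, hmσ.1, h⟩⟩,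
    exists_isBrMax_bruhatBelow_lCoset (lCoset_trichotomy h₁) w σ⟩
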